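/- arXiv:2408.09484 — 2 statements merged into one kernel-verified Lean document; each statement's English description precedes it below -/
import Mathlib

section
/- Let H be a real Hilbert space and T : H → H a nonexpansive map (i.e. ‖T u − T v‖ ≤ ‖u − v‖ for all u, v ∈ H) whose set of fixed points is nonempty. Let (κ_n) be a sequence in (0,1] with ∑_{n=0}^∞ κ_n (1 − κ_n) = ∞, fix f_0 ∈ H, and define the Krasnoselskii–Mann iterates f_{n+1} = (1 − κ_n) f_n + κ_n T f_n. Then the sequence (f_n) converges weakly in H to a fixed point of T. -/
open scoped RealInnerProductSpace

open Filter Topology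

/-!
Fejér monotonicity: for a fixed point `p`, nonexpansiveness gives
`‖f (n+1) - p‖² ≤ ‖f n - p‖² - κ n (1 - κ n) ‖f n - T (f n)‖²`. So `(f n)` is bounded,
`‖f n - p‖` converges, and since the residual `‖f n - T (f n)‖` is nonincreasing while
`∑ κ n (1 - κ n) = ∞`, the residual tends to `0`. By Banach–Alaoglu every ultrafilter finer than
`atTop` has a weak limit of `(f n)`, which is a fixed point because `I - T` is demiclosed at `0`.
Opial's argument shows that all these weak limits coincide: `‖f n - p‖² - ‖f n - q‖²` converges and
is affine in `f n`, so its limits along two such ultrafilters, `-‖p - q‖²` and `‖p - q‖²`, agree.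
-/

theorem tendsto_zero_of_antitone_of_mul_le_sub {a e d : ℕ → ℝ} (ha : ∀ n, 0 ≤ a n)
    (hdiv : Tendsto (fun N => ∑ n ∈ Finset.range N, a n) atTop atTop)
    (he : Antitone e) (he0 : ∀ n, 0 ≤ e n) (hd : ∀ n, 0 ≤ d n)
    (hstep : ∀ n, a n * e n ≤ d n - d (n + 1)) : Tendsto e atTop (𝓝 0) := by
  have hsum : ∀ N, e N * ∑ n ∈ Finset.range N, a n ≤ d 0 := fun N =>
    calc e N * ∑ n ∈ Finset.range N, a n
        ≤ ∑ n ∈ Finset.range N, a n * e n := by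
          rw [Finset.mul_sum]
          refine Finset.sum_le_sum fun n hn => ?_
          rw [mul_comm]
          exact mul_le_mul_of_nonneg_left (he (Finset.mem_range.1 hn).le) (ha n)
      _ ≤ ∑ n ∈ Finset.range N, (d n - d (n + 1)) := Finset.sum_le_sum fun n _ => hstep n
      _ = d 0 - d N := Finset.sum_range_sub' d N
      _ ≤ d 0 := sub_le_self _ (hd N)
  refine tendsto_of_tendsto_of_tendsto_of_le_of_le' tendsto_const_nhds
    ((tendsto_const_nhds (x := d 0)).div_atTop hdiv) (Eventually.of_forall he0) ?_
  filter_upwards [hdiv.eventually_gt_atTop 0] with N hN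
  exact (le_div_iff₀ hN).2 (hsum N)

section Hilbert

variable {H : Type*} [NormedAddCommGroup H] [InnerProductSpace ℝ H] {ι : Type*}

def WeakTendsto (f : ι → H) (l : Filter ι) (p : H) : Prop :=
  ∀ h : H, Tendsto (fun i => ⟪f i, h⟫) l (𝓝 ⟪p, h⟫)

-- Banach–Alaoglu in the dual, pulled back by the Riesz isomorphism.
theorem exists_weakTendsto_of_norm_le [CompleteSpace H] {f : ι → H} {C : ℝ}
    (hC : ∀ i, ‖f i‖ ≤ C) (U : Ultrafilter ι) : ∃ p, WeakTendsto f U p := by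
  let g : ι → WeakDual ℝ H := fun i => StrongDual.toWeakDual (InnerProductSpace.toDual ℝ H (f i))
  have hg : (U.map g : Filter (WeakDual ℝ H)) ≤
      𝓟 (WeakDual.toStrongDual ⁻¹' Metric.closedBall 0 C) := by
    rw [le_principal_iff, Ultrafilter.coe_map, mem_map]
    exact univ_mem' fun i => by simpa [g] using hC i
  obtain ⟨φ, -, hφ⟩ := (WeakDual.isCompact_closedBall 0 C).ultrafilter_le_nhds _ hg
  refine ⟨(InnerProductSpace.toDual ℝ H).symm (WeakDual.toStrongDual φ), fun h => ?_⟩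
  rw [InnerProductSpace.toDual_symm_apply]
  exact tendsto_iff_forall_eval_tendsto_topDualPairing.1 hφ h

theorem norm_sub_sq_sub_norm_sub_sq (x p q : H) :
    ‖x - p‖ ^ 2 - ‖x - q‖ ^ 2 = ‖p‖ ^ 2 - ‖q‖ ^ 2 - 2 * ⟪x, p - q⟫ := by
  rw [norm_sub_sq_real, norm_sub_sq_real, inner_sub_right]
  ring

theorem WeakTendsto.tendsto_norm_sub_sq_sub_norm_sub_sq {f : ι → H} {l : Filter ι} {x : H}
    (hf : WeakTendsto f l x) (p q : H) :
    Tendsto (fun i => ‖f i - p‖ ^ 2 - ‖f i - q‖ ^ 2) l (𝓝 (‖x - p‖ ^ 2 - ‖x - q‖ ^ 2)) := by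
  simp only [norm_sub_sq_sub_norm_sub_sq]
  exact tendsto_const_nhds.sub ((hf (p - q)).const_mul 2)

theorem WeakTendsto.eq_of_tendsto_norm_sub {f : ι → H} {l F G : Filter ι} [F.NeBot] [G.NeBot]
    (hF : F ≤ l) (hG : G ≤ l) {p q : H} {r s : ℝ} (hp : Tendsto (fun i => ‖f i - p‖) l (𝓝 r))
    (hq : Tendsto (fun i => ‖f i - q‖) l (𝓝 s)) (hfp : WeakTendsto f F p)
    (hfq : WeakTendsto f G q) : p = q := by
  have hlim : Tendsto (fun i => ‖f i - p‖ ^ 2 - ‖f i - q‖ ^ 2) l (𝓝 (r ^ 2 - s ^ 2)) :=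
    (hp.pow 2).sub (hq.pow 2)
  have hF' := tendsto_nhds_unique (hlim.mono_left hF) (hfp.tendsto_norm_sub_sq_sub_norm_sub_sq p q)
  have hG' := tendsto_nhds_unique (hlim.mono_left hG) (hfq.tendsto_norm_sub_sq_sub_norm_sub_sq p q)
  rw [sub_self, norm_zero] at hF'
  rw [sub_self, norm_zero, norm_sub_rev] at hG'
  have : ‖p - q‖ = 0 := by nlinarith
  exact sub_eq_zero.1 (norm_eq_zero.1 this)

theorem WeakTendsto.map_eq_of_tendsto_norm_sub_map {T : H → H}
    (hT : ∀ u v, ‖T u - T v‖ ≤ ‖u - v‖) {f : ι → H} {l : Filter ι} [l.NeBot] {C : ℝ}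
    (hC : ∀ i, ‖f i‖ ≤ C) (hres : Tendsto (fun i => ‖f i - T (f i)‖) l (𝓝 0)) {p : H}
    (hfp : WeakTendsto f l p) : T p = p := by
  set r := fun i => ‖f i - T (f i)‖
  have hub : ∀ i, ‖f i - T p‖ ^ 2 - ‖f i - p‖ ^ 2 ≤ r i ^ 2 + 2 * (C + ‖p‖) * r i := fun i => by
    have h₁ : ‖f i - T p‖ ≤ r i + ‖f i - p‖ :=
      (norm_sub_le_norm_sub_add_norm_sub _ (T (f i)) _).trans (add_le_add_right (hT _ _) _)
    have h₂ : ‖f i - p‖ ≤ C + ‖p‖ := (norm_sub_le _ _).trans (add_le_add_left (hC i) _)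
    nlinarith [norm_nonneg (f i - T p), norm_nonneg (f i - p), norm_nonneg (f i - T (f i))]
  have hub_lim : Tendsto (fun i => r i ^ 2 + 2 * (C + ‖p‖) * r i) l (𝓝 0) := by
    simpa using (hres.pow 2).add (hres.const_mul (2 * (C + ‖p‖)))
  have hle := le_of_tendsto_of_tendsto' (hfp.tendsto_norm_sub_sq_sub_norm_sub_sq (T p) p)
    hub_lim hub
  rw [sub_self, norm_zero, norm_sub_rev] at hle
  have : ‖T p - p‖ = 0 := by nlinarith [norm_nonneg (T p - p)]
  exact sub_eq_zero.1 (norm_eq_zero.1 this)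

end Hilbert

section KrasnoselskiiMann

variable {H : Type*} [NormedAddCommGroup H] [InnerProductSpace ℝ H]
  {T : H → H} {κ : ℕ → ℝ} {f : ℕ → H}

theorem norm_one_sub_smul_add_smul_sq (x y : H) (c : ℝ) :
    ‖(1 - c) • x + c • y‖ ^ 2 = (1 - c) * ‖x‖ ^ 2 + c * ‖y‖ ^ 2 - c * (1 - c) * ‖x - y‖ ^ 2 := by
  rw [norm_add_sq_real, norm_sub_sq_real, real_inner_smul_left, real_inner_smul_right,
    norm_smul, norm_smul, Real.norm_eq_abs, Real.norm_eq_abs, mul_pow, mul_pow, sq_abs, sq_abs]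
  ring

theorem km_norm_succ_sub_sq_le (hT : ∀ u v, ‖T u - T v‖ ≤ ‖u - v‖) (hκ : ∀ n, 0 ≤ κ n)
    (hrec : ∀ n, f (n + 1) = (1 - κ n) • f n + κ n • T (f n)) {p : H} (hp : T p = p) (n : ℕ) :
    ‖f (n + 1) - p‖ ^ 2 ≤ ‖f n - p‖ ^ 2 - κ n * (1 - κ n) * ‖f n - T (f n)‖ ^ 2 := by
  have hsplit : f (n + 1) - p = (1 - κ n) • (f n - p) + κ n • (T (f n) - p) := by
    rw [hrec n]; module
  have hTp : ‖T (f n) - p‖ ^ 2 ≤ ‖f n - p‖ ^ 2 := by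
    gcongr
    simpa only [hp] using hT (f n) p
  rw [hsplit, norm_one_sub_smul_add_smul_sq, sub_sub_sub_cancel_right]
  nlinarith [mul_le_mul_of_nonneg_left hTp (hκ n)]

theorem km_antitone_norm_sub (hT : ∀ u v, ‖T u - T v‖ ≤ ‖u - v‖)
    (hκ : ∀ n, κ n ∈ Set.Icc (0 : ℝ) 1)
    (hrec : ∀ n, f (n + 1) = (1 - κ n) • f n + κ n • T (f n)) {p : H} (hp : T p = p) :
    Antitone fun n => ‖f n - p‖ := by
  refine antitone_nat_of_succ_le fun n => ?_
  obtain ⟨hκ0, hκ1⟩ := hκ n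
  have hsq := km_norm_succ_sub_sq_le hT (fun n => (hκ n).1) hrec hp n
  have := mul_nonneg (mul_nonneg hκ0 (sub_nonneg.2 hκ1)) (sq_nonneg ‖f n - T (f n)‖)
  exact (pow_le_pow_iff_left₀ (norm_nonneg _) (norm_nonneg _) two_ne_zero).1 (by linarith)

theorem km_antitone_norm_sub_map (hT : ∀ u v, ‖T u - T v‖ ≤ ‖u - v‖)
    (hκ : ∀ n, κ n ∈ Set.Icc (0 : ℝ) 1)
    (hrec : ∀ n, f (n + 1) = (1 - κ n) • f n + κ n • T (f n)) :
    Antitone fun n => ‖f n - T (f n)‖ := by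
  refine antitone_nat_of_succ_le fun n => ?_
  obtain ⟨hκ0, hκ1⟩ := hκ n
  have hsplit : f (n + 1) - T (f (n + 1)) =
      (1 - κ n) • (f n - T (f n)) + (T (f n) - T (f (n + 1))) := by
    rw [hrec n]; module
  have hstep : f n - f (n + 1) = κ n • (f n - T (f n)) := by
    rw [hrec n]; module
  calc ‖f (n + 1) - T (f (n + 1))‖
      ≤ ‖(1 - κ n) • (f n - T (f n))‖ + ‖T (f n) - T (f (n + 1))‖ := hsplit ▸ norm_add_le _ _
    _ ≤ (1 - κ n) * ‖f n - T (f n)‖ + ‖f n - f (n + 1)‖ := by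
        rw [norm_smul, Real.norm_of_nonneg (sub_nonneg.2 hκ1)]
        gcongr
        exact hT _ _
    _ = ‖f n - T (f n)‖ := by
        rw [hstep, norm_smul, Real.norm_of_nonneg hκ0]
        ring

theorem km_tendsto_norm_sub_map (hT : ∀ u v, ‖T u - T v‖ ≤ ‖u - v‖)
    (hκ : ∀ n, κ n ∈ Set.Icc (0 : ℝ) 1)
    (hdiv : Tendsto (fun N => ∑ n ∈ Finset.range N, κ n * (1 - κ n)) atTop atTop)
    (hrec : ∀ n, f (n + 1) = (1 - κ n) • f n + κ n • T (f n)) {p : H} (hp : T p = p) :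
    Tendsto (fun n => ‖f n - T (f n)‖) atTop (𝓝 0) := by
  have hsq : Tendsto (fun n => ‖f n - T (f n)‖ ^ 2) atTop (𝓝 0) :=
    tendsto_zero_of_antitone_of_mul_le_sub (fun n => mul_nonneg (hκ n).1 (sub_nonneg.2 (hκ n).2))
      hdiv
      (fun m n hmn => pow_le_pow_left₀ (norm_nonneg _) (km_antitone_norm_sub_map hT hκ hrec hmn) 2)
      (fun n => sq_nonneg _) (fun n => sq_nonneg ‖f n - p‖)
      (fun n => by linarith [km_norm_succ_sub_sq_le hT (fun n => (hκ n).1) hrec hp n])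
  simpa [Real.sqrt_sq (norm_nonneg _)] using hsq.sqrt

end KrasnoselskiiMann

theorem stmt_0_general (H : Type*) [NormedAddCommGroup H] [InnerProductSpace ℝ H] [CompleteSpace H]
    (T : H → H) (hT : ∀ u v : H, ‖T u - T v‖ ≤ ‖u - v‖)
    (hfix : ∃ p : H, T p = p)
    (κ : ℕ → ℝ) (hκ : ∀ n, κ n ∈ Set.Ioc (0 : ℝ) 1)
    (hdiv : Filter.Tendsto (fun N => ∑ n ∈ Finset.range N, κ n * (1 - κ n))
      Filter.atTop Filter.atTop)
    (f : ℕ → H)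
    (hrec : ∀ n, f (n + 1) = (1 - κ n) • f n + κ n • T (f n)) :
    ∃ p : H, T p = p ∧
      ∀ h : H, Filter.Tendsto (fun n => ⟪f n, h⟫) Filter.atTop (nhds ⟪p, h⟫) := by
  obtain ⟨p₀, hp₀⟩ := hfix
  have hκ' : ∀ n, κ n ∈ Set.Icc (0 : ℝ) 1 := fun n => Set.Ioc_subset_Icc_self (hκ n)
  have hbdd : ∀ n, ‖f n‖ ≤ ‖f 0 - p₀‖ + ‖p₀‖ := fun n =>
    (norm_le_norm_sub_add _ p₀).trans <| by
      gcongr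
      exact km_antitone_norm_sub hT hκ' hrec hp₀ (Nat.zero_le n)
  have hres := km_tendsto_norm_sub_map hT hκ' hdiv hrec hp₀
  have hcluster : ∀ U : Ultrafilter ℕ, (U : Filter ℕ) ≤ atTop →
      ∃ p, T p = p ∧ WeakTendsto f (U : Filter ℕ) p :=
    fun U hU => by
      obtain ⟨p, hfp⟩ := exists_weakTendsto_of_norm_le hbdd U
      exact ⟨p, hfp.map_eq_of_tendsto_norm_sub_map hT hbdd (hres.mono_left hU), hfp⟩
  have hdist : ∀ p, T p = p → Tendsto (fun n => ‖f n - p‖) atTop (𝓝 (⨅ n, ‖f n - p‖)) :=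
    fun p hp => tendsto_atTop_ciInf (km_antitone_norm_sub hT hκ' hrec hp)
      ⟨0, Set.forall_mem_range.2 fun n => norm_nonneg _⟩
  obtain ⟨p, hp, hfp⟩ := hcluster (Ultrafilter.of atTop) (Ultrafilter.of_le _)
  refine ⟨p, hp, fun h => (tendsto_iff_ultrafilter _ _ _).2 fun U hU => ?_⟩
  obtain ⟨q, hq, hfq⟩ := hcluster U hU
  rw [hfq.eq_of_tendsto_norm_sub hU (Ultrafilter.of_le _) (hdist q hq) (hdist p hp) hfp] at hfq
  exact hfq h

/-- Krasnoselskii–Mann iterates of a nonexpansive map with nonempty fixed point set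
converge weakly to a fixed point. -/
theorem stmt_0 (H : Type*) [NormedAddCommGroup H] [InnerProductSpace ℝ H] [CompleteSpace H]
    (T : H → H) (hT : ∀ u v : H, ‖T u - T v‖ ≤ ‖u - v‖)
    (hfix : ∃ p : H, T p = p)
    (κ : ℕ → ℝ) (hκ : ∀ n, κ n ∈ Set.Ioc (0 : ℝ) 1)
    (hdiv : Filter.Tendsto (fun N => ∑ n ∈ Finset.range N, κ n * (1 - κ n))
      Filter.atTop Filter.atTop)
    (f : ℕ → H) (f₀ : H) (hf0 : f 0 = f₀)
    (hrec : ∀ n, f (n + 1) = (1 - κ n) • f n + κ n • T (f n)) :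
    ∃ p : H, T p = p ∧
      ∀ h : H, Filter.Tendsto (fun n => ⟪f n, h⟫) Filter.atTop (nhds ⟪p, h⟫) :=
  stmt_0_general H T hT hfix κ hκ hdiv f hrec
end

section
/- Let X be a Banach space, q ∈ [0,1), and T : X → X a q-contraction with fixed point f*. Let (κ_ν) be a sequence in (0,1], set v_0 = 0 and v_M = ∑_{ν=0}^{M−1} κ_ν for M ≥ 1, and define the Krasnoselskii–Mann iterates f_0 = g, f_{M+1} = (1 − κ_M) f_M + κ_M T f_M. Then for every M ≥ 0, ‖f_M − f*‖ ≤ ( e^{1−q} / (1 − q) ) ‖T g − g‖ e^{−(1−q) v_M}. -/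
/-- Error bound for the Krasnoselskii–Mann iteration applied to a `q`-contraction. -/
theorem stmt_7 (X : Type*) [NormedAddCommGroup X] [NormedSpace ℝ X]
    (q : ℝ) (hq0 : 0 ≤ q) (hq1 : q < 1)
    (T : X → X) (hT : ∀ u v : X, ‖T u - T v‖ ≤ q * ‖u - v‖)
    (fstar : X) (hfix : T fstar = fstar)
    (κ : ℕ → ℝ) (hκ : ∀ ν, κ ν ∈ Set.Ioc (0 : ℝ) 1)
    (g : X) (f : ℕ → X) (hf0 : f 0 = g)
    (hrec : ∀ M, f (M + 1) = (1 - κ M) • f M + κ M • T (f M))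
    (v : ℕ → ℝ) (hv : ∀ M, v M = ∑ ν ∈ Finset.range M, κ ν) :
    ∀ M : ℕ, ‖f M - fstar‖ ≤
      Real.exp (1 - q) / (1 - q) * ‖T g - g‖ * Real.exp (-(1 - q) * v M) := by
  have h1q : (0:ℝ) < 1 - q := by linarith
  have hC : ‖g - fstar‖ ≤ ‖T g - g‖ / (1 - q) := by
    have h := hT g fstar
    rw [hfix] at h
    have htri : ‖g - fstar‖ ≤ ‖g - T g‖ + ‖T g - fstar‖ := norm_sub_le_norm_sub_add_norm_sub _ _ _
    have hsym : ‖g - T g‖ = ‖T g - g‖ := norm_sub_rev _ _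
    rw [div_eq_inv_mul, le_inv_mul_iff₀ h1q]
    nlinarith [norm_nonneg (T g - fstar)]
  have key : ∀ M, ‖f M - fstar‖ ≤ Real.exp (-(1 - q) * v M) * ‖g - fstar‖ := by
    intro M
    induction M with
    | zero => simp [hf0, hv]
    | succ M ih =>
      obtain ⟨hκ0, hκ1⟩ := hκ M
      have step : ‖f (M + 1) - fstar‖ ≤ (1 - (1 - q) * κ M) * ‖f M - fstar‖ := by
        have hdecomp : f (M + 1) - fstar
            = (1 - κ M) • (f M - fstar) + κ M • (T (f M) - fstar) := by
          rw [hrec M]; module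
        have hTq : ‖T (f M) - fstar‖ ≤ q * ‖f M - fstar‖ := by
          have := hT (f M) fstar; rwa [hfix] at this
        calc ‖f (M + 1) - fstar‖
            ≤ ‖(1 - κ M) • (f M - fstar)‖ + ‖κ M • (T (f M) - fstar)‖ := by
              rw [hdecomp]; exact norm_add_le _ _
          _ = (1 - κ M) * ‖f M - fstar‖ + κ M * ‖T (f M) - fstar‖ := by
              rw [norm_smul, norm_smul, Real.norm_eq_abs, Real.norm_eq_abs,
                abs_of_nonneg (by linarith), abs_of_nonneg (le_of_lt hκ0)]
          _ ≤ (1 - (1 - q) * κ M) * ‖f M - fstar‖ := by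
              nlinarith [norm_nonneg (f M - fstar)]
      have hexp : (1 - (1 - q) * κ M) ≤ Real.exp (-(1 - q) * κ M) := by
        have := Real.add_one_le_exp (-(1 - q) * κ M)
        linarith
      have hvsucc : v (M + 1) = v M + κ M := by
        rw [hv, hv, Finset.sum_range_succ]
      have hnn : (0:ℝ) ≤ 1 - (1 - q) * κ M := by nlinarith
      calc ‖f (M + 1) - fstar‖ ≤ (1 - (1 - q) * κ M) * ‖f M - fstar‖ := step
        _ ≤ (1 - (1 - q) * κ M) * (Real.exp (-(1 - q) * v M) * ‖g - fstar‖) := by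
            exact mul_le_mul_of_nonneg_left ih hnn
        _ ≤ Real.exp (-(1 - q) * κ M) * (Real.exp (-(1 - q) * v M) * ‖g - fstar‖) := by
            apply mul_le_mul_of_nonneg_right hexp
            positivity
        _ = Real.exp (-(1 - q) * v (M + 1)) * ‖g - fstar‖ := by
            rw [hvsucc, show -(1 - q) * (v M + κ M) = -(1 - q) * κ M + -(1 - q) * v M by ring,
              Real.exp_add, mul_assoc]
  intro M
  have hexp1 : (1:ℝ) ≤ Real.exp (1 - q) := by
    have := Real.add_one_le_exp (1 - q); linarith
  have hE : (0:ℝ) < Real.exp (-(1 - q) * v M) := Real.exp_pos _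
  calc ‖f M - fstar‖ ≤ Real.exp (-(1 - q) * v M) * ‖g - fstar‖ := key M
    _ ≤ Real.exp (-(1 - q) * v M) * (‖T g - g‖ / (1 - q)) :=
        mul_le_mul_of_nonneg_left hC (le_of_lt hE)
    _ ≤ Real.exp (1 - q) * (Real.exp (-(1 - q) * v M) * (‖T g - g‖ / (1 - q))) :=
        le_mul_of_one_le_left (by positivity) hexp1
    _ = Real.exp (1 - q) / (1 - q) * ‖T g - g‖ * Real.exp (-(1 - q) * v M) := by ring
end
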